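/- With r_0(a) = I_1(a)/I_0(a), the second derivative r_0''(a) is strictly negative for all a > 0; i.e., r_0 is strictly concave on (0,∞). -/

import Mathlib

/-!
Since `r₀ = I₁ / I₀` solves the Riccati equation `r' = 1 - r² - r / a`, differentiating
once more gives `a² r₀'' = -P_a(r₀)` with `P_a(r) = a + (2a² - 2) r - 3a r² - 2a² r³`.
As `P_a(r) / r` is decreasing in `r > 0`, it suffices to find `U > r₀` with `P_a(U) > 0`.
The Riccati operator `x y' + y + x y²` obeys a comparison principle on `[0, a]`, under which
`0` is a subsolution and `U(x) = x / (1/2 + √(x² + 3/4 + Φ(x)))` with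
`Φ(x) = (3 + 2x²) / (2 + 2x² + 4x³)` a supersolution. What remains are polynomial
inequalities, obtained by squaring away the root.
-/

open Real

/-- The modified Bessel function of the first kind of integer order `n`,
`I_n(a) = (1/π) ∫_0^π e^{a cos θ} cos(nθ) dθ`. -/
noncomputable def besselI (n : ℕ) (a : ℝ) : ℝ :=
  (1 / π) * ∫ θ in (0 : ℝ)..π, Real.exp (a * Real.cos θ) * Real.cos (n * θ)

open MeasureTheory intervalIntegral Set Filter Topology

lemma besselI_zero_eq (a : ℝ) :
    besselI 0 a = π⁻¹ * ∫ θ in (0:ℝ)..π, exp (a * cos θ) * cos θ ^ 0 := by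
  simp [besselI]

lemma besselI_one_eq (a : ℝ) :
    besselI 1 a = π⁻¹ * ∫ θ in (0:ℝ)..π, exp (a * cos θ) * cos θ ^ 1 := by
  simp [besselI]

lemma besselI_zero_pos (a : ℝ) : 0 < besselI 0 a := by
  rw [besselI_zero_eq]
  have : 0 < ∫ θ in (0:ℝ)..π, exp (a * cos θ) * cos θ ^ 0 :=
    intervalIntegral_pos_of_pos (Continuous.intervalIntegrable (by fun_prop) _ _)
      (fun θ => by simp [exp_pos]) pi_pos
  positivity

lemma hasDerivAt_integral_exp_mul_cos_pow (k : ℕ) (a : ℝ) :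
    HasDerivAt (fun x => ∫ θ in (0:ℝ)..π, exp (x * cos θ) * cos θ ^ k)
      (∫ θ in (0:ℝ)..π, exp (a * cos θ) * cos θ ^ (k + 1)) a := by
  have hbound : ∀ θ, ∀ x ∈ Metric.ball a 1,
      ‖exp (x * cos θ) * cos θ ^ (k + 1)‖ ≤ exp (|a| + 1) := by
    intro θ x hx
    have hx : |x| ≤ |a| + 1 := by
      have := abs_sub_abs_le_abs_sub x a
      rw [Metric.mem_ball, dist_eq] at hx
      linarith
    have hcos : |cos θ| ≤ 1 := abs_cos_le_one θ
    have hexp : exp (x * cos θ) ≤ exp (|a| + 1) := by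
      refine exp_le_exp.2 ((le_abs_self _).trans ?_)
      rw [abs_mul]
      exact (mul_le_of_le_one_right (abs_nonneg x) hcos).trans hx
    rw [norm_mul, norm_pow, norm_eq_abs, norm_eq_abs, abs_of_pos (exp_pos _)]
    calc exp (x * cos θ) * |cos θ| ^ (k + 1) ≤ exp (|a| + 1) * 1 :=
          mul_le_mul hexp (pow_le_one₀ (abs_nonneg _) hcos) (by positivity) (exp_pos _).le
      _ = exp (|a| + 1) := mul_one _
  refine (hasDerivAt_integral_of_dominated_loc_of_deriv_le (Metric.ball_mem_nhds a one_pos)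
    (bound := fun _ => exp (|a| + 1))
    (F' := fun x θ => exp (x * cos θ) * cos θ ^ (k + 1))
    (Eventually.of_forall fun x => (by fun_prop : Continuous _).aestronglyMeasurable)
    (by apply Continuous.intervalIntegrable; fun_prop)
    (by fun_prop : Continuous _).aestronglyMeasurable
    (ae_of_all _ fun θ _ x hx => hbound θ x hx)
    intervalIntegrable_const
    (ae_of_all _ fun θ _ x _ => ?_)).2
  exact (((hasDerivAt_id' x).mul_const (cos θ)).exp.mul_const (cos θ ^ k)).congr_deriv (by ring)

/-- Integration by parts: `(sin θ · e^{a cos θ})' = (cos θ - a sin² θ) e^{a cos θ}`. -/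
lemma integral_exp_mul_cos_pow_two (a : ℝ) (ha : a ≠ 0) :
    ∫ θ in (0:ℝ)..π, exp (a * cos θ) * cos θ ^ 2 =
      (∫ θ in (0:ℝ)..π, exp (a * cos θ) * cos θ ^ 0) -
        (∫ θ in (0:ℝ)..π, exp (a * cos θ) * cos θ ^ 1) / a := by
  have hparts : ∫ θ in (0:ℝ)..π, (cos θ - a * sin θ ^ 2) * exp (a * cos θ) = 0 := by
    have hderiv : ∀ θ ∈ uIcc (0:ℝ) π, HasDerivAt (fun t => sin t * exp (a * cos t))
        ((cos θ - a * sin θ ^ 2) * exp (a * cos θ)) θ := fun θ _ =>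
      ((hasDerivAt_sin θ).mul ((hasDerivAt_cos θ).const_mul a).exp).congr_deriv (by ring)
    simpa using
      integral_eq_sub_of_hasDerivAt hderiv (by apply Continuous.intervalIntegrable; fun_prop)
  have hsplit : ∫ θ in (0:ℝ)..π, (cos θ - a * sin θ ^ 2) * exp (a * cos θ) =
      (∫ θ in (0:ℝ)..π, exp (a * cos θ) * cos θ ^ 1) -
        a * ((∫ θ in (0:ℝ)..π, exp (a * cos θ) * cos θ ^ 0) -
          ∫ θ in (0:ℝ)..π, exp (a * cos θ) * cos θ ^ 2) := by
    rw [← intervalIntegral.integral_sub, ← intervalIntegral.integral_const_mul,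
      ← intervalIntegral.integral_sub]
    · refine integral_congr fun θ _ => ?_
      linear_combination (-a * exp (a * cos θ)) * sin_sq_add_cos_sq θ
    all_goals apply Continuous.intervalIntegrable; fun_prop
  rw [hsplit] at hparts
  generalize (∫ θ in (0:ℝ)..π, exp (a * cos θ) * cos θ ^ 0) = J₀ at *
  generalize (∫ θ in (0:ℝ)..π, exp (a * cos θ) * cos θ ^ 1) = J₁ at *
  generalize (∫ θ in (0:ℝ)..π, exp (a * cos θ) * cos θ ^ 2) = J₂ at *
  field_simp
  linear_combination hparts

lemma hasDerivAt_besselI_zero (a : ℝ) : HasDerivAt (besselI 0) (besselI 1 a) a := by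
  rw [funext besselI_zero_eq, besselI_one_eq]
  exact (hasDerivAt_integral_exp_mul_cos_pow 0 a).const_mul _

lemma hasDerivAt_besselI_one (a : ℝ) (ha : a ≠ 0) :
    HasDerivAt (besselI 1) (besselI 0 a - besselI 1 a / a) a := by
  rw [besselI_zero_eq, besselI_one_eq, funext besselI_one_eq]
  refine ((hasDerivAt_integral_exp_mul_cos_pow 1 a).const_mul π⁻¹).congr_deriv ?_
  rw [integral_exp_mul_cos_pow_two a ha]
  ring

noncomputable def besselRatio (a : ℝ) : ℝ := besselI 1 a / besselI 0 a

lemma continuous_besselRatio : Continuous besselRatio := by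
  have h₁ : Continuous (besselI 1) := by
    rw [funext besselI_one_eq]
    exact continuous_iff_continuousAt.2 fun a =>
      ((hasDerivAt_integral_exp_mul_cos_pow 1 a).const_mul _).continuousAt
  have h₀ : Continuous (besselI 0) :=
    continuous_iff_continuousAt.2 fun a => (hasDerivAt_besselI_zero a).continuousAt
  exact h₁.div h₀ fun a => (besselI_zero_pos a).ne'

lemma hasDerivAt_besselRatio {a : ℝ} (ha : a ≠ 0) :
    HasDerivAt besselRatio (1 - besselRatio a ^ 2 - besselRatio a / a) a := by
  have h₀ := (besselI_zero_pos a).ne'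
  refine ((hasDerivAt_besselI_one a ha).div (hasDerivAt_besselI_zero a) h₀).congr_deriv ?_
  unfold besselRatio
  field_simp
  ring

noncomputable def riccatiCubic (a r : ℝ) : ℝ :=
  -2 * a ^ 2 * r ^ 3 - 3 * a * r ^ 2 + (2 * a ^ 2 - 2) * r + a

lemma deriv_deriv_besselRatio {a : ℝ} (ha : a ≠ 0) :
    deriv (deriv besselRatio) a = -riccatiCubic a (besselRatio a) / a ^ 2 := by
  have hderiv :
      deriv besselRatio =ᶠ[𝓝 a] fun t => 1 - besselRatio t ^ 2 - besselRatio t / t := by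
    filter_upwards [isOpen_ne.mem_nhds ha] with t ht
    exact (hasDerivAt_besselRatio ht).deriv
  have hr := hasDerivAt_besselRatio ha
  have h2 : HasDerivAt (fun t => 1 - besselRatio t ^ 2 - besselRatio t / t) _ a :=
    ((hr.pow 2).const_sub 1).sub (hr.div (hasDerivAt_id' a) ha)
  rw [hderiv.deriv_eq, h2.deriv]
  unfold riccatiCubic
  field_simp
  ring

/-- `x · exp (∫₀ˣ (f + g))` is an integrating factor for the difference of the Riccati
operators `x y' + y + x y²` applied to `g` and to `f`. -/
lemma lt_of_riccati_comparison {f g f' g' : ℝ → ℝ} {a : ℝ} (ha : 0 < a)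
    (hf : ContinuousOn f (Icc 0 a)) (hg : ContinuousOn g (Icc 0 a))
    (hf' : ∀ x ∈ Ioo 0 a, HasDerivAt f (f' x) x)
    (hg' : ∀ x ∈ Ioo 0 a, HasDerivAt g (g' x) x)
    (hlt : ∀ x ∈ Ioo 0 a, x * f' x + f x + x * f x ^ 2 < x * g' x + g x + x * g x ^ 2) :
    f a < g a := by
  set F : ℝ → ℝ := fun x => ∫ t in (0:ℝ)..x, (f t + g t)
  set H : ℝ → ℝ := fun x => x * (g x - f x) * exp (F x) with hH
  have hF : ContinuousOn F (Icc 0 a) := by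
    have := continuousOn_primitive_interval (μ := volume) (a := 0) (b := a)
      (f := fun t => f t + g t) (by rw [uIcc_of_le ha.le]; exact (hf.add hg).integrableOn_Icc)
    rwa [uIcc_of_le ha.le] at this
  have hHcont : ContinuousOn H (Icc 0 a) :=
    (continuousOn_id.mul (hg.sub hf)).mul (continuous_exp.comp_continuousOn hF)
  have hH' : ∀ x ∈ interior (Icc (0:ℝ) a), 0 < deriv H x := by
    intro x hx
    rw [interior_Icc] at hx
    have hfg := (hf' x hx).continuousAt.add (hg' x hx).continuousAt
    have hF' : HasDerivAt F (f x + g x) x := by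
      refine integral_hasDerivAt_right ?_ ?_ hfg
      · refine ((hf.add hg).mono (Icc_subset_Icc le_rfl hx.2.le)).intervalIntegrable_of_Icc hx.1.le
      · exact ContinuousAt.stronglyMeasurableAtFilter isOpen_Ioo
          (fun y hy => ((hf' y hy).continuousAt.add (hg' y hy).continuousAt)) x hx
    have hHd : HasDerivAt H _ x := ((hasDerivAt_id' x).mul ((hg' x hx).sub (hf' x hx))).mul hF'.exp
    rw [hHd.deriv]
    have : 0 < exp (F x) * ((x * g' x + g x + x * g x ^ 2) - (x * f' x + f x + x * f x ^ 2)) :=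
      mul_pos (exp_pos _) (sub_pos.2 (hlt x hx))
    convert this using 1
    simp only [Pi.mul_apply, Pi.sub_apply]
    ring
  have hmono := strictMonoOn_of_deriv_pos (convex_Icc 0 a) hHcont hH'
  have hHa : H 0 < H a := hmono (left_mem_Icc.2 ha.le) (right_mem_Icc.2 ha.le) ha
  simp only [hH, zero_mul, mul_pos_iff_of_pos_right (exp_pos _), mul_pos_iff_of_pos_left ha,
    sub_pos] at hHa
  exact hHa

lemma besselRatio_pos {a : ℝ} (ha : 0 < a) : 0 < besselRatio a := by
  refine lt_of_riccati_comparison (f := fun _ => 0) (f' := fun _ => 0) ha continuousOn_const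
    continuous_besselRatio.continuousOn (fun x _ => hasDerivAt_const x 0)
    (fun x hx => hasDerivAt_besselRatio hx.1.ne') fun x hx => ?_
  have hx := hx.1
  field_simp
  nlinarith

noncomputable def barrierPhi (x : ℝ) : ℝ := (3 + 2 * x ^ 2) / (2 + 2 * x ^ 2 + 4 * x ^ 3)

noncomputable def barrierW (x : ℝ) : ℝ := √(x ^ 2 + 3 / 4 + barrierPhi x)

/-- An upper barrier for `r₀`; the correction `barrierPhi` makes it agree with
`r₀(x) = x / 2 + O(x³)` at `0` and with `r₀(x) = 1 - 1 / (2x) - 1 / (8x²) + O(x⁻³)`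
at `∞`. -/
noncomputable def barrier (x : ℝ) : ℝ := x / (1 / 2 + barrierW x)

section barrier

variable {x : ℝ}

lemma barrierPhi_mul (hx : 0 ≤ x) :
    barrierPhi x * (2 + 2 * x ^ 2 + 4 * x ^ 3) = 3 + 2 * x ^ 2 := by
  unfold barrierPhi
  field_simp

lemma barrierPhi_nonneg (hx : 0 ≤ x) : 0 ≤ barrierPhi x := by
  unfold barrierPhi
  positivity

lemma barrierW_sq (hx : 0 ≤ x) : barrierW x ^ 2 = x ^ 2 + 3 / 4 + barrierPhi x :=
  sq_sqrt (by have := barrierPhi_nonneg hx; positivity)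

lemma half_lt_barrierW (hx : 0 ≤ x) : 1 / 2 < barrierW x := by
  rw [← sqrt_sq (by norm_num : (0:ℝ) ≤ 1 / 2)]
  exact sqrt_lt_sqrt (by norm_num) (by nlinarith [barrierPhi_nonneg hx])

lemma continuousOn_barrier : ContinuousOn barrier (Ici 0) := by
  have hΦ : ContinuousOn barrierPhi (Ici 0) :=
    ContinuousOn.div (by fun_prop) (by fun_prop) fun x (hx : 0 ≤ x) => by positivity
  have hW : ContinuousOn barrierW (Ici 0) := by unfold barrierW; fun_prop
  exact continuousOn_id.div (continuousOn_const.add hW)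
    fun x hx => (by linarith [half_lt_barrierW hx] : 1 / 2 + barrierW x ≠ 0)

lemma hasDerivAt_barrierPhi (hx : 0 ≤ x) :
    HasDerivAt barrierPhi ((4 * x * (2 + 2 * x ^ 2 + 4 * x ^ 3) -
      (3 + 2 * x ^ 2) * (4 * x + 12 * x ^ 2)) / (2 + 2 * x ^ 2 + 4 * x ^ 3) ^ 2) x := by
  have hN : HasDerivAt (fun y : ℝ => 3 + 2 * y ^ 2) (4 * x) x :=
    (((hasDerivAt_pow 2 x).const_mul 2).const_add 3).congr_deriv (by ring)
  have hD : HasDerivAt (fun y : ℝ => 2 + 2 * y ^ 2 + 4 * y ^ 3) (4 * x + 12 * x ^ 2) x :=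
    ((((hasDerivAt_pow 2 x).const_mul 2).const_add 2).add
      ((hasDerivAt_pow 3 x).const_mul 4)).congr_deriv (by ring)
  exact hN.div hD (by positivity)

/-- Squaring reduces this to the positivity of a polynomial with nonnegative coefficients. -/
lemma two_mul_barrierW_mul_barrierPhi_lt (hx : 0 < x) :
    2 * barrierW x * barrierPhi x + x * deriv barrierPhi x < 3 / 2 + 2 * barrierPhi x := by
  have hΦ := barrierPhi_mul hx.le
  have hW := barrierW_sq hx.le
  have hE : 2 * barrierW x * ((3 + 2 * x ^ 2) * (2 + 2 * x ^ 2 + 4 * x ^ 3)) <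
      18 + 36 * x ^ 2 + 84 * x ^ 3 + 14 * x ^ 4 + 48 * x ^ 5 + 24 * x ^ 6 := by
    refine lt_of_pow_lt_pow_left₀ 2 (by positivity) ?_
    have hsq : (18 + 36 * x ^ 2 + 84 * x ^ 3 + 14 * x ^ 4 + 48 * x ^ 5 + 24 * x ^ 6) ^ 2 -
        (2 * barrierW x * ((3 + 2 * x ^ 2) * (2 + 2 * x ^ 2 + 4 * x ^ 3))) ^ 2 =
        144 * x ^ 2 + 2160 * x ^ 3 + 156 * x ^ 4 + 5328 * x ^ 5 + 7312 * x ^ 6 + 3120 * x ^ 7 +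
          8404 * x ^ 8 + 4032 * x ^ 9 + 1952 * x ^ 10 + 2048 * x ^ 11 + 320 * x ^ 12 := by
      linear_combination (-4 * (3 + 2 * x ^ 2) ^ 2 * (2 + 2 * x ^ 2 + 4 * x ^ 3) ^ 2) * hW -
        4 * (3 + 2 * x ^ 2) ^ 2 * (2 + 2 * x ^ 2 + 4 * x ^ 3) * hΦ
    have : 0 < 144 * x ^ 2 + 2160 * x ^ 3 + 156 * x ^ 4 + 5328 * x ^ 5 + 7312 * x ^ 6 +
        3120 * x ^ 7 + 8404 * x ^ 8 + 4032 * x ^ 9 + 1952 * x ^ 10 + 2048 * x ^ 11 +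
        320 * x ^ 12 := by positivity
    linarith
  rw [(hasDerivAt_barrierPhi hx.le).deriv, ← sub_pos]
  have key : (3 / 2 + 2 * barrierPhi x - (2 * barrierW x * barrierPhi x + x * ((4 * x *
      (2 + 2 * x ^ 2 + 4 * x ^ 3) - (3 + 2 * x ^ 2) * (4 * x + 12 * x ^ 2)) /
        (2 + 2 * x ^ 2 + 4 * x ^ 3) ^ 2))) * (2 + 2 * x ^ 2 + 4 * x ^ 3) ^ 2 =
      18 + 36 * x ^ 2 + 84 * x ^ 3 + 14 * x ^ 4 + 48 * x ^ 5 + 24 * x ^ 6 -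
        2 * barrierW x * ((3 + 2 * x ^ 2) * (2 + 2 * x ^ 2 + 4 * x ^ 3)) := by
    field_simp
    linear_combination 4 * (2 + 2 * x ^ 2 + 4 * x ^ 3) * (1 - barrierW x) * hΦ
  exact pos_of_mul_pos_left (key ▸ sub_pos.2 hE) (by positivity)

lemma hasDerivAt_barrier (hx : 0 < x) :
    HasDerivAt barrier ((1 / 2 + barrierW x -
      x * ((2 * x + deriv barrierPhi x) / (2 * barrierW x))) / (1 / 2 + barrierW x) ^ 2) x := by
  have hW : HasDerivAt barrierW ((2 * x + deriv barrierPhi x) / (2 * barrierW x)) x :=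
    (((hasDerivAt_pow 2 x).add_const (3 / 4)).add
      (hasDerivAt_barrierPhi hx.le).differentiableAt.hasDerivAt).sqrt
      (add_pos_of_pos_of_nonneg (by positivity) (barrierPhi_nonneg hx.le)).ne'
      |>.congr_deriv (by simp [barrierW])
  refine ((hasDerivAt_id' x).div (hW.const_add (1 / 2)) ?_).congr_deriv (by ring)
  linarith [half_lt_barrierW hx.le]

lemma one_sub_barrier_sq_sub_lt_deriv (hx : 0 < x) :
    1 - barrier x ^ 2 - barrier x / x < deriv barrier x := by
  have hW := barrierW_sq hx.le
  have hWpos : 0 < barrierW x := by linarith [half_lt_barrierW hx.le]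
  have hkey := two_mul_barrierW_mul_barrierPhi_lt hx
  have hxW : x * ((2 * x + deriv barrierPhi x) / (2 * barrierW x)) < barrierW x - barrierPhi x := by
    rw [mul_div_assoc', div_lt_iff₀ (by positivity)]
    nlinarith
  rw [(hasDerivAt_barrier hx).deriv, lt_div_iff₀ (by positivity)]
  have : (1 - barrier x ^ 2 - barrier x / x) * (1 / 2 + barrierW x) ^ 2 =
      (1 / 2 + barrierW x) ^ 2 - x ^ 2 - (1 / 2 + barrierW x) := by
    unfold barrier
    field_simp
  rw [this]
  nlinarith

end barrier

lemma besselRatio_lt_barrier {a : ℝ} (ha : 0 < a) : besselRatio a < barrier a := by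
  refine lt_of_riccati_comparison ha continuous_besselRatio.continuousOn
    (continuousOn_barrier.mono Icc_subset_Ici_self) (fun x hx => hasDerivAt_besselRatio hx.1.ne')
    (fun x hx => (hasDerivAt_barrier hx.1).differentiableAt.hasDerivAt) fun x hx => ?_
  have hx := hx.1
  have := one_sub_barrier_sq_sub_lt_deriv hx
  calc x * (1 - besselRatio x ^ 2 - besselRatio x / x) + besselRatio x + x * besselRatio x ^ 2
      = x * 1 := by field_simp; ring
    _ < x * (deriv barrier x + barrier x ^ 2 + barrier x / x) := by gcongr; linarith
    _ = x * deriv barrier x + barrier x + x * barrier x ^ 2 := by field_simp; ring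

/-- `riccatiCubic a r / r` is decreasing in `r > 0`. -/
lemma riccatiCubic_pos_of_le {a r u : ℝ} (ha : 0 < a) (hr : 0 < r) (hru : r ≤ u)
    (hu : 0 < riccatiCubic a u) : 0 < riccatiCubic a r := by
  have hid : u * riccatiCubic a r = (u - r) * a + r * riccatiCubic a u +
      r * u * (u - r) * (2 * a ^ 2 * (r + u) + 3 * a) := by
    unfold riccatiCubic; ring
  have hsum : 0 < (u - r) * a + r * riccatiCubic a u +
      r * u * (u - r) * (2 * a ^ 2 * (r + u) + 3 * a) := by
    have : 0 ≤ r * u * (u - r) * (2 * a ^ 2 * (r + u) + 3 * a) :=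
      mul_nonneg (mul_nonneg (mul_nonneg hr.le (hr.le.trans hru)) (sub_nonneg.2 hru))
        (add_nonneg (mul_nonneg (by positivity) (by linarith)) (by linarith))
    nlinarith [mul_pos hr hu]
  exact pos_of_mul_pos_right (hid ▸ hsum) (by linarith)

lemma barrier_poly_pos_of_lt {a : ℝ} (ha : 0 < a) (ha9 : a < 9 / 10) :
    0 < 64 * a ^ 2 - 96 * a ^ 3 + 100 * a ^ 4 + 56 * a ^ 5 - 115 * a ^ 6 + 118 * a ^ 7 -
      42 * a ^ 8 - 92 * a ^ 9 + 56 * a ^ 10 - 48 * a ^ 11 := by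
  have h9 : 0 < 9 / 10 - a := by linarith
  nlinarith [mul_pos ha h9, sq_nonneg a, mul_pos (mul_pos ha ha) h9, sq_nonneg (a - 1 / 2),
    mul_pos ha ha, pow_pos ha 3, pow_pos ha 4, pow_pos ha 5, mul_pos (pow_pos ha 4) h9,
    mul_pos (pow_pos ha 6) h9, mul_pos (pow_pos ha 8) h9]

lemma barrier_poly_neg_of_nonpos {a : ℝ} (ha : 0 < a) (hB : 2 + a ^ 2 - 2 * a ^ 3 ≤ 0) :
    64 * a ^ 2 - 96 * a ^ 3 + 100 * a ^ 4 + 56 * a ^ 5 - 115 * a ^ 6 + 118 * a ^ 7 -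
      42 * a ^ 8 - 92 * a ^ 9 + 56 * a ^ 10 - 48 * a ^ 11 < 0 := by
  have ha1 : 1 ≤ a := by
    by_contra! hc
    nlinarith [sq_nonneg a, mul_pos ha ha]
  have ht : 0 ≤ 2 * a ^ 3 - a ^ 2 - 2 := by linarith
  nlinarith [mul_nonneg ht (pow_pos ha 8).le, mul_nonneg ht (pow_pos ha 6).le,
    mul_nonneg ht (pow_pos ha 4).le, mul_nonneg (mul_nonneg ht ht) (pow_pos ha 2).le,
    mul_nonneg (mul_nonneg ht ht) ht, pow_le_pow_left₀ zero_le_one ha1 2,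
    sq_nonneg (a - 1), mul_nonneg ht (sub_nonneg.2 ha1)]

/-- When one of the two terms `w B`, `A` is negative, compare their squares: by `hw2`,
`D ((w B)² - A²)` with `D = 2 + 2a² + 4a³` is the polynomial of `barrier_poly_pos_of_lt`. -/
lemma barrierW_mul_add_pos {a w : ℝ} (ha : 0 < a) (hw : 0 < w)
    (hw2 : w ^ 2 * (2 + 2 * a ^ 2 + 4 * a ^ 3) =
      (a ^ 2 + 3 / 4) * (2 + 2 * a ^ 2 + 4 * a ^ 3) + (3 + 2 * a ^ 2)) :
    0 < w * (2 + a ^ 2 - 2 * a ^ 3) + (4 * a ^ 4 - 3 * a ^ 3 + 7 / 2 * a ^ 2 - 3) := by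
  have hD : (0:ℝ) < 2 + 2 * a ^ 2 + 4 * a ^ 3 := by positivity
  have hsq : (w * (2 + a ^ 2 - 2 * a ^ 3)) ^ 2 * (2 + 2 * a ^ 2 + 4 * a ^ 3) =
      ((a ^ 2 + 3 / 4) * (2 + 2 * a ^ 2 + 4 * a ^ 3) + (3 + 2 * a ^ 2)) *
        (2 + a ^ 2 - 2 * a ^ 3) ^ 2 := by
    linear_combination (2 + a ^ 2 - 2 * a ^ 3) ^ 2 * hw2
  rcases le_or_gt (4 * a ^ 4 - 3 * a ^ 3 + 7 / 2 * a ^ 2 - 3) 0 with hA | hA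
  · have ha9 : a < 9 / 10 := by
      by_contra! hc
      nlinarith [mul_nonneg (mul_nonneg (sub_nonneg.2 hc) (sub_nonneg.2 hc)) (sub_nonneg.2 hc),
        sq_nonneg (a - 9 / 10), mul_nonneg (sub_nonneg.2 hc) ha.le, sq_nonneg a]
    have hB : 0 < 2 + a ^ 2 - 2 * a ^ 3 := by nlinarith [sq_nonneg a, mul_pos ha ha]
    have hlt : (4 * a ^ 4 - 3 * a ^ 3 + 7 / 2 * a ^ 2 - 3) ^ 2 <
        (w * (2 + a ^ 2 - 2 * a ^ 3)) ^ 2 :=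
      (mul_lt_mul_iff_of_pos_right hD).mp
        (by rw [hsq]; linarith [barrier_poly_pos_of_lt ha ha9])
    linarith [(abs_lt_of_sq_lt_sq' hlt (mul_pos hw hB).le).1]
  · rcases le_or_gt (2 + a ^ 2 - 2 * a ^ 3) 0 with hB | hB
    · have hlt : (w * (2 + a ^ 2 - 2 * a ^ 3)) ^ 2 <
          (4 * a ^ 4 - 3 * a ^ 3 + 7 / 2 * a ^ 2 - 3) ^ 2 :=
        (mul_lt_mul_iff_of_pos_right hD).mp
          (by rw [hsq]; linarith [barrier_poly_neg_of_nonpos ha hB])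
      linarith [(abs_lt_of_sq_lt_sq' hlt hA.le).1]
    · exact add_pos (mul_pos hw hB) hA

lemma riccatiCubic_barrier_pos {a : ℝ} (ha : 0 < a) : 0 < riccatiCubic a (barrier a) := by
  set s := 1 / 2 + barrierW a with hs
  have hs_pos : 0 < s := by linarith [half_lt_barrierW ha.le]
  have hD : (0:ℝ) < 2 + 2 * a ^ 2 + 4 * a ^ 3 := by positivity
  have hw2 : barrierW a ^ 2 * (2 + 2 * a ^ 2 + 4 * a ^ 3) =
      (a ^ 2 + 3 / 4) * (2 + 2 * a ^ 2 + 4 * a ^ 3) + (3 + 2 * a ^ 2) := by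
    linear_combination (2 + 2 * a ^ 2 + 4 * a ^ 3) * barrierW_sq ha.le + barrierPhi_mul ha.le
  have hQ : 0 < s ^ 3 + (2 * a ^ 2 - 2) * s ^ 2 - 3 * a ^ 2 * s - 2 * a ^ 4 := by
    refine pos_of_mul_pos_left ((barrierW_mul_add_pos ha ?_ hw2).trans_eq ?_) hD.le
    · linarith [half_lt_barrierW ha.le]
    · rw [hs]
      linear_combination (1 / 2 - barrierW a - 2 * a ^ 2) * hw2
  have hcube : riccatiCubic a (barrier a) * s ^ 3 =
      a * (s ^ 3 + (2 * a ^ 2 - 2) * s ^ 2 - 3 * a ^ 2 * s - 2 * a ^ 4) := by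
    unfold riccatiCubic barrier
    rw [← hs]
    field_simp
    ring
  exact pos_of_mul_pos_left (hcube ▸ mul_pos ha hQ) (by positivity)

theorem bessel_ratio_strictly_concave (a : ℝ) (ha : 0 < a) :
    deriv (deriv (fun t => besselI 1 t / besselI 0 t)) a < 0 := by
  change deriv (deriv besselRatio) a < 0
  rw [deriv_deriv_besselRatio ha.ne']
  have hP : 0 < riccatiCubic a (besselRatio a) :=
    riccatiCubic_pos_of_le ha (besselRatio_pos ha) (besselRatio_lt_barrier ha).le
      (riccatiCubic_barrier_pos ha)
  exact div_neg_of_neg_of_pos (neg_neg_of_pos hP) (by positivity)
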